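/- arXiv:1901.01226 — 3 statements merged into one kernel-verified Lean document; each statement's English description precedes it below -/
import Mathlib

section
/- Let D be a relative derivation of Rees(A) and let n ∈ Λ. Then there is a unique ℂ-linear derivation θ_n : A → A such that for every μ ∈ Λ and every a ∈ A_{≤μ}, θ_n(a) equals the coefficient at n+μ of the element D(a t^μ) of Rees(A). In particular the value prescribed by this formula is independent of the choice of μ with a ∈ A_{≤μ}, the resulting map θ_n is a derivation of A, and θ_n belongs to Derv(A)_{≤n}. -/
set_option synthInstance.maxHeartbeats 1000000
set_option maxHeartbeats 1000000

noncomputable section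

/-- An exhaustive multiplicative `Λ`-filtration (`Λ = ℤ^r`, partially ordered by the
submonoid `Λ⁺` generated by `α₁,…,α_r`, with every element of `Λ` a difference of two
elements of `Λ⁺`) on a commutative `ℂ`-algebra `A`. -/
structure MultiFiltration (r : ℕ) (α : Fin r → (Fin r → ℤ)) (A : Type*)
    [CommRing A] [Algebra ℂ A] : Type _ where
  F : (Fin r → ℤ) → Submodule ℂ A
  mono : ∀ μ lam : Fin r → ℤ,
    lam - μ ∈ AddSubmonoid.closure (Set.range α) → F μ ≤ F lam
  one_mem : (1 : A) ∈ F 0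
  mul_mem : ∀ μ ν : Fin r → ℤ, ∀ x ∈ F μ, ∀ y ∈ F ν, x * y ∈ F (μ + ν)
  exhaustive : ∀ x : A, ∃ lam, x ∈ F lam
  directed : ∀ lam : Fin r → ℤ, ∃ p ∈ AddSubmonoid.closure (Set.range α),
    ∃ q ∈ AddSubmonoid.closure (Set.range α), lam = p - q

namespace MultiFiltration

variable {r : ℕ} {α : Fin r → (Fin r → ℤ)} {A : Type*} [CommRing A] [Algebra ℂ A]
variable (𝓕 : MultiFiltration r α A)

/-- The Rees algebra `Rees(A) = ⊕_λ A_{≤λ} t^λ`, as a `ℂ`-subalgebra of the monoid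
algebra of `Λ = ℤ^r` over `A`. -/
def ReesAlg : Subalgebra ℂ (AddMonoidAlgebra A (Fin r → ℤ)) where
  carrier := {f | ∀ lam, f.coeff lam ∈ 𝓕.F lam}
  mul_mem' := by
    classical
    intro f g hf hg lam
    rw [AddMonoidAlgebra.coeff_mul]
    refine Submodule.sum_mem (𝓕.F lam) fun μ _ =>
      Submodule.sum_mem (𝓕.F lam) fun ν _ => ?_
    beta_reduce
    split_ifs with h
    · exact h ▸ 𝓕.mul_mem μ ν _ (hf μ) _ (hg ν)
    · exact (𝓕.F lam).zero_mem
  add_mem' := by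
    intro f g hf hg lam
    exact add_mem (hf lam) (hg lam)
  algebraMap_mem' := by
    classical
    intro x lam
    show (AddMonoidAlgebra.single 0 (algebraMap ℂ A x)).coeff lam ∈ 𝓕.F lam
    rw [AddMonoidAlgebra.coeff_single, Finsupp.single_apply]
    split_ifs with h
    · exact h ▸ (by rw [Algebra.algebraMap_eq_smul_one]; exact (𝓕.F 0).smul_mem x 𝓕.one_mem)
    · exact (𝓕.F lam).zero_mem

variable {𝓕}

theorem mem_ReesAlg {f : AddMonoidAlgebra A (Fin r → ℤ)} :
    f ∈ 𝓕.ReesAlg ↔ ∀ lam, f.coeff lam ∈ 𝓕.F lam := Iff.rfl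

variable (𝓕)

/-- The element `x t^μ` of the Rees algebra, for `x ∈ A_{≤μ}`. -/
def singleMem (μ : Fin r → ℤ) (x : A) (hx : x ∈ 𝓕.F μ) : 𝓕.ReesAlg :=
  ⟨AddMonoidAlgebra.single μ x, by
    classical
    intro lam
    show (AddMonoidAlgebra.single μ x).coeff lam ∈ 𝓕.F lam
    rw [AddMonoidAlgebra.coeff_single, Finsupp.single_apply]
    split_ifs with h
    · exact h ▸ hx
    · exact (𝓕.F lam).zero_mem⟩

/-- The element `t^{α_i}` of the Rees algebra. -/
def tpow (i : Fin r) : 𝓕.ReesAlg :=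
  𝓕.singleMem (α i) 1
    (𝓕.mono 0 (α i) (by simpa using AddSubmonoid.subset_closure (Set.mem_range_self i)) 𝓕.one_mem)

/-- The filtration `Derv(A)_{≤λ}` on `ℂ`-linear derivations of `A`. -/
def DervLE (lam : Fin r → ℤ) : Submodule ℂ (Derivation ℂ A A) where
  carrier := {θ | ∀ μ : Fin r → ℤ, ∀ x ∈ 𝓕.F μ, θ x ∈ 𝓕.F (μ + lam)}
  add_mem' := by
    intro θ η hθ hη μ x hx
    simpa using add_mem (hθ μ x hx) (hη μ x hx)
  zero_mem' := by
    intro μ x hx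
    simp
  smul_mem' := by
    intro c θ hθ μ x hx
    simpa using (𝓕.F (μ + lam)).smul_mem c (hθ μ x hx)

variable {𝓕}

theorem mem_DervLE {θ : Derivation ℂ A A} {lam : Fin r → ℤ} :
    θ ∈ 𝓕.DervLE lam ↔ ∀ μ : Fin r → ℤ, ∀ x ∈ 𝓕.F μ, θ x ∈ 𝓕.F (μ + lam) := Iff.rfl

end MultiFiltration

end

/-!
A relative derivation kills every `t^ν` with `ν ∈ Λ⁺`, these being products of the `t^{α_i}`.
So `D (x t^{μ+ν}) = D (x t^μ · t^ν) = t^ν · D (x t^μ)`: enlarging `μ` only shifts the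
coefficients of `D (x t^μ)`, and the coefficient at `n + μ` is unchanged. As any two degrees have
a common upper bound, that coefficient does not depend on `μ` at all. Additivity and the Leibniz
rule for `θ_n` are then read off from those of `D` in a common degree, using
`x t^μ · y t^ν = xy t^{μ+ν}`.
-/

noncomputable section

namespace MultiFiltration

variable {r : ℕ} {α : Fin r → (Fin r → ℤ)} {A : Type*} [CommRing A] [Algebra ℂ A]
  {𝓕 : MultiFiltration r α A}

theorem exists_upper_bound (𝓕 : MultiFiltration r α A) (μ ν : Fin r → ℤ) :
    ∃ lam, lam - μ ∈ AddSubmonoid.closure (Set.range α) ∧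
      lam - ν ∈ AddSubmonoid.closure (Set.range α) := by
  obtain ⟨p, hp, q, hq, hpq⟩ := 𝓕.directed (ν - μ)
  refine ⟨μ + p, by simpa using hp, ?_⟩
  rwa [show μ + p - ν = q by linear_combination -hpq]

theorem one_mem_of_mem_closure {ν : Fin r → ℤ} (hν : ν ∈ AddSubmonoid.closure (Set.range α)) :
    (1 : A) ∈ 𝓕.F ν :=
  𝓕.mono 0 ν (by simpa using hν) 𝓕.one_mem

theorem coe_singleMem (μ : Fin r → ℤ) (x : A) (hx : x ∈ 𝓕.F μ) :
    ((𝓕.singleMem μ x hx : 𝓕.ReesAlg) : AddMonoidAlgebra A (Fin r → ℤ)) =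
      AddMonoidAlgebra.single μ x :=
  rfl

theorem singleMem_add (μ : Fin r → ℤ) {x y : A} (hx : x ∈ 𝓕.F μ) (hy : y ∈ 𝓕.F μ) :
    𝓕.singleMem μ (x + y) (add_mem hx hy) = 𝓕.singleMem μ x hx + 𝓕.singleMem μ y hy :=
  Subtype.ext (AddMonoidAlgebra.single_add μ x y)

theorem singleMem_smul (μ : Fin r → ℤ) (c : ℂ) {x : A} (hx : x ∈ 𝓕.F μ) :
    𝓕.singleMem μ (c • x) ((𝓕.F μ).smul_mem c hx) = c • 𝓕.singleMem μ x hx :=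
  Subtype.ext (AddMonoidAlgebra.smul_single c μ x).symm

theorem singleMem_mul_singleMem (μ ν : Fin r → ℤ) {x y : A} (hx : x ∈ 𝓕.F μ) (hy : y ∈ 𝓕.F ν) :
    𝓕.singleMem μ x hx * 𝓕.singleMem ν y hy =
      𝓕.singleMem (μ + ν) (x * y) (𝓕.mul_mem μ ν x hx y hy) :=
  Subtype.ext (AddMonoidAlgebra.single_mul_single ..)

theorem coeff_singleMem_mul (μ lam : Fin r → ℤ) {x : A} (hx : x ∈ 𝓕.F μ) (f : 𝓕.ReesAlg) :
    ((𝓕.singleMem μ x hx * f : 𝓕.ReesAlg) : AddMonoidAlgebra A (Fin r → ℤ)).coeff (μ + lam) =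
      x * (f : AddMonoidAlgebra A (Fin r → ℤ)).coeff lam := by
  rw [Subalgebra.coe_mul, coe_singleMem, AddMonoidAlgebra.coeff_single_mul_apply,
    neg_add_cancel_left]

variable (D : Derivation ℂ 𝓕.ReesAlg 𝓕.ReesAlg)

theorem map_singleMem_one_eq_zero (hD : ∀ i : Fin r, D (𝓕.tpow i) = 0) {ν : Fin r → ℤ}
    (hν : ν ∈ AddSubmonoid.closure (Set.range α)) (h1 : (1 : A) ∈ 𝓕.F ν) :
    D (𝓕.singleMem ν 1 h1) = 0 := by
  induction hν using AddSubmonoid.closure_induction with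
  | mem _ hν =>
    obtain ⟨i, rfl⟩ := hν
    exact hD i
  | zero => exact D.map_one_eq_zero
  | add a b ha hb iha ihb =>
    have hprod := singleMem_mul_singleMem a b (one_mem_of_mem_closure (𝓕 := 𝓕) ha)
      (one_mem_of_mem_closure hb)
    simp only [mul_one] at hprod
    rw [← hprod, D.leibniz, iha, ihb, smul_zero, smul_zero, add_zero]

/-- `θ_n(x)` computed in degree `μ`. -/
def derivCoeff (n μ : Fin r → ℤ) (x : A) (hx : x ∈ 𝓕.F μ) : A :=
  ((D (𝓕.singleMem μ x hx) : 𝓕.ReesAlg) : AddMonoidAlgebra A (Fin r → ℤ)).coeff (n + μ)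

theorem derivCoeff_mem (n μ : Fin r → ℤ) (x : A) (hx : x ∈ 𝓕.F μ) :
    derivCoeff D n μ x hx ∈ 𝓕.F (μ + n) :=
  add_comm n μ ▸ (D (𝓕.singleMem μ x hx)).2 (n + μ)

variable {D}

theorem derivCoeff_eq_of_sub_mem_closure (hD : ∀ i : Fin r, D (𝓕.tpow i) = 0)
    (n : Fin r → ℤ) {μ lam : Fin r → ℤ} (hμ : lam - μ ∈ AddSubmonoid.closure (Set.range α))
    (x : A) (hx : x ∈ 𝓕.F μ) (hx' : x ∈ 𝓕.F lam) :
    derivCoeff D n lam x hx' = derivCoeff D n μ x hx := by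
  have h1 := one_mem_of_mem_closure (𝓕 := 𝓕) hμ
  have hprod : 𝓕.singleMem lam x hx' = 𝓕.singleMem (lam - μ) 1 h1 * 𝓕.singleMem μ x hx := by
    rw [singleMem_mul_singleMem]
    congr 1 <;> simp
  rw [derivCoeff, hprod, D.leibniz, map_singleMem_one_eq_zero D hD hμ, smul_zero, add_zero,
    smul_eq_mul, show n + lam = (lam - μ) + (n + μ) by abel, coeff_singleMem_mul, one_mul,
    derivCoeff]

theorem derivCoeff_eq (hD : ∀ i : Fin r, D (𝓕.tpow i) = 0) (n : Fin r → ℤ)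
    {μ ν : Fin r → ℤ} (x : A) (hμ : x ∈ 𝓕.F μ) (hν : x ∈ 𝓕.F ν) :
    derivCoeff D n μ x hμ = derivCoeff D n ν x hν := by
  obtain ⟨lam, hlμ, hlν⟩ := 𝓕.exists_upper_bound μ ν
  have hx := 𝓕.mono μ lam hlμ hμ
  rw [← derivCoeff_eq_of_sub_mem_closure hD n hlμ x hμ hx,
    ← derivCoeff_eq_of_sub_mem_closure hD n hlν x hν hx]

theorem derivCoeff_add (n μ : Fin r → ℤ) {x y : A} (hx : x ∈ 𝓕.F μ) (hy : y ∈ 𝓕.F μ) :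
    derivCoeff D n μ (x + y) (add_mem hx hy) = derivCoeff D n μ x hx + derivCoeff D n μ y hy := by
  rw [derivCoeff, singleMem_add μ hx hy, D.map_add, Subalgebra.coe_add,
    AddMonoidAlgebra.coeff_add, Finsupp.add_apply, derivCoeff, derivCoeff]

theorem derivCoeff_smul (n μ : Fin r → ℤ) (c : ℂ) {x : A} (hx : x ∈ 𝓕.F μ) :
    derivCoeff D n μ (c • x) ((𝓕.F μ).smul_mem c hx) = c • derivCoeff D n μ x hx := by
  rw [derivCoeff, singleMem_smul μ c hx, D.map_smul, Subalgebra.coe_smul,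
    AddMonoidAlgebra.coeff_smul_apply, derivCoeff]

theorem derivCoeff_mul (n μ ν : Fin r → ℤ) {x y : A} (hx : x ∈ 𝓕.F μ) (hy : y ∈ 𝓕.F ν) :
    derivCoeff D n (μ + ν) (x * y) (𝓕.mul_mem μ ν x hx y hy) =
      x * derivCoeff D n ν y hy + y * derivCoeff D n μ x hx := by
  rw [derivCoeff, ← singleMem_mul_singleMem, D.leibniz, smul_eq_mul, smul_eq_mul,
    Subalgebra.coe_add, AddMonoidAlgebra.coeff_add, Finsupp.add_apply, show n + (μ + ν) = μ + (n + ν) by abel, coeff_singleMem_mul,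
    show μ + (n + ν) = ν + (n + μ) by abel, coeff_singleMem_mul, derivCoeff, derivCoeff]

variable (D)

def coeffDerivation (hD : ∀ i : Fin r, D (𝓕.tpow i) = 0) (n : Fin r → ℤ) :
    Derivation ℂ A A :=
  Derivation.mk'
    { toFun := fun x => derivCoeff D n _ x (𝓕.exhaustive x).choose_spec
      map_add' := fun x y => by
        obtain ⟨lam, hlx, hly⟩ := 𝓕.exists_upper_bound (𝓕.exhaustive x).choose
          (𝓕.exhaustive y).choose
        have hx := 𝓕.mono _ lam hlx (𝓕.exhaustive x).choose_spec
        have hy := 𝓕.mono _ lam hly (𝓕.exhaustive y).choose_spec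
        rw [derivCoeff_eq hD n _ _ (add_mem hx hy), derivCoeff_eq hD n x _ hx,
          derivCoeff_eq hD n y _ hy, derivCoeff_add]
      map_smul' := fun c x => by
        have hx := (𝓕.exhaustive x).choose_spec
        rw [derivCoeff_eq hD n _ _ ((𝓕.F _).smul_mem c hx), derivCoeff_smul]
        rfl }
    fun x y => by
      have hx := (𝓕.exhaustive x).choose_spec
      have hy := (𝓕.exhaustive y).choose_spec
      simp only [LinearMap.coe_mk, AddHom.coe_mk, smul_eq_mul]
      rw [derivCoeff_eq hD n _ _ (𝓕.mul_mem _ _ x hx y hy), derivCoeff_mul]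

theorem coeffDerivation_apply (hD : ∀ i : Fin r, D (𝓕.tpow i) = 0) (n μ : Fin r → ℤ) (x : A)
    (hx : x ∈ 𝓕.F μ) : coeffDerivation D hD n x = derivCoeff D n μ x hx :=
  derivCoeff_eq hD n x _ hx

end MultiFiltration

end

open MultiFiltration in
theorem relative_derivation_coefficient_derivation_general
    {r : ℕ} {α : Fin r → (Fin r → ℤ)} {A : Type*} [CommRing A] [Algebra ℂ A]
    (𝓕 : MultiFiltration r α A)
    (D : Derivation ℂ (𝓕.ReesAlg) (𝓕.ReesAlg)) (hD : ∀ i : Fin r, D (𝓕.tpow i) = 0)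
    (n : Fin r → ℤ) :
    ∃ θ : Derivation ℂ A A,
      (∀ (μ : Fin r → ℤ) (x : A) (hx : x ∈ 𝓕.F μ),
        θ x = ((D (𝓕.singleMem μ x hx) : 𝓕.ReesAlg) : AddMonoidAlgebra A (Fin r → ℤ)).coeff (n + μ)) ∧
      (θ ∈ 𝓕.DervLE n) ∧
      (∀ θ' : Derivation ℂ A A,
        (∀ (μ : Fin r → ℤ) (x : A) (hx : x ∈ 𝓕.F μ),
          θ' x = ((D (𝓕.singleMem μ x hx) : 𝓕.ReesAlg) : AddMonoidAlgebra A (Fin r → ℤ)).coeff (n + μ))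
        → θ' = θ) := by
  refine ⟨coeffDerivation D hD n, coeffDerivation_apply D hD n, ?_, ?_⟩
  · intro μ x hx
    rw [coeffDerivation_apply D hD n μ x hx]
    exact derivCoeff_mem D n μ x hx
  · intro θ' hθ'
    ext x
    obtain ⟨μ, hx⟩ := 𝓕.exhaustive x
    rw [hθ' μ x hx, coeffDerivation_apply D hD n μ x hx, derivCoeff]

open MultiFiltration in
/-- Let `D` be a relative derivation of `Rees(A)` and `n ∈ Λ`.  There
is a unique `ℂ`-linear derivation `θ_n : A → A` such that for `a ∈ A_{≤μ}`, `θ_n(a)` is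
the coefficient at `n + μ` of `D(a t^μ)`; moreover `θ_n ∈ Derv(A)_{≤n}`. -/
theorem relative_derivation_coefficient_derivation
    {r : ℕ} (hr : 1 ≤ r) {α : Fin r → (Fin r → ℤ)} {A : Type*} [CommRing A] [Algebra ℂ A]
    (𝓕 : MultiFiltration r α A)
    (D : Derivation ℂ (𝓕.ReesAlg) (𝓕.ReesAlg)) (hD : ∀ i : Fin r, D (𝓕.tpow i) = 0)
    (n : Fin r → ℤ) :
    ∃ θ : Derivation ℂ A A,
      (∀ (μ : Fin r → ℤ) (x : A) (hx : x ∈ 𝓕.F μ),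
        θ x = ((D (𝓕.singleMem μ x hx) : 𝓕.ReesAlg) : AddMonoidAlgebra A (Fin r → ℤ)).coeff (n + μ)) ∧
      (θ ∈ 𝓕.DervLE n) ∧
      (∀ θ' : Derivation ℂ A A,
        (∀ (μ : Fin r → ℤ) (x : A) (hx : x ∈ 𝓕.F μ),
          θ' x = ((D (𝓕.singleMem μ x hx) : 𝓕.ReesAlg) : AddMonoidAlgebra A (Fin r → ℤ)).coeff (n + μ))
        → θ' = θ) :=
  relative_derivation_coefficient_derivation_general 𝓕 D hD n
end

section
/- Every ℂ-linear derivation θ of the polynomial ring P = ℂ[a,b,c,d] satisfying θ(ad − bc) = 0 can be written as a P-linear combination of the six derivations c∂_a + d∂_b, b∂_a + d∂_c, a∂_a − d∂_d, b∂_b − c∂_c, a∂_b + c∂_d, and a∂_c + b∂_d. That is, the P-module of derivations of P annihilating the determinant ad − bc is generated by these six derivations. -/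
/-!
Applying `θ` to `ad - bc` shows that `(θ d, -θ c, -θ b, θ a)` is a syzygy of the variables
`(a, b, c, d)`. The variables form a regular sequence, so every syzygy of them is a Koszul one:
it equals `M (a, b, c, d)` for an alternating matrix `M`, proved by induction on the number of
variables. The six entries of `M` above the diagonal are the coefficients of `θ` on the six
given derivations.
-/

open MvPolynomial

noncomputable section

/-- The polynomial ring `P = ℂ[a,b,c,d]`. -/
abbrev P : Type := MvPolynomial (Fin 4) ℂ

def a : P := X 0
def b : P := X 1
def c : P := X 2
def d : P := X 3

/-- The partial derivative derivations. -/
def da : Derivation ℂ P P := pderiv 0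
def db : Derivation ℂ P P := pderiv 1
def dc : Derivation ℂ P P := pderiv 2
def dd : Derivation ℂ P P := pderiv 3

namespace MvPolynomial

variable {σ R : Type*} [CommRing R]

theorem mem_ideal_span_X_image_of_X_mul_mem {s : Set σ} {i : σ} (hi : i ∉ s)
    {g : MvPolynomial σ R} (h : X i * g ∈ Ideal.span (X '' s)) :
    g ∈ Ideal.span (X '' s) := by
  set I : Ideal (MvPolynomial σ R) := Ideal.span (X '' s)
  set φ : MvPolynomial σ R →ₐ[R] MvPolynomial σ R := aeval (sᶜ.indicator X)
  have le_ker : I ≤ RingHom.ker φ :=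
    Ideal.span_le.2 <| by rintro _ ⟨j, hj, rfl⟩; simp [φ, hj]
  have mk_comp : (Ideal.Quotient.mkₐ R I).comp φ = Ideal.Quotient.mkₐ R I := by
    refine algHom_ext fun j => ?_
    by_cases hj : j ∈ s
    · simpa [φ, hj, eq_comm (a := (0 : _ ⧸ I)), Ideal.Quotient.eq_zero_iff_mem] using
        (Ideal.subset_span ⟨j, hj, rfl⟩ : X j ∈ I)
    · simp [φ, hj]
  have sub_mem (p) : p - φ p ∈ I := Ideal.Quotient.eq.1 (AlgHom.congr_fun mk_comp p).symm
  have hφg : φ g = 0 := by simpa [φ, hi] using le_ker h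
  simpa [hφg] using sub_mem g

theorem exists_alternating_of_sum_mul_X_eq_zero [DecidableEq σ] (s : Finset σ)
    (f : σ → MvPolynomial σ R) (h : ∑ i ∈ s, f i * X i = 0) :
    ∃ p : σ → σ → MvPolynomial σ R,
      (∀ i, p i i = 0) ∧ (∀ i j, p j i = -p i j) ∧ ∀ i ∈ s, f i = ∑ j ∈ s, p i j * X j := by
  induction s using Finset.induction_on generalizing f with
  | empty => exact ⟨0, by simp, by simp, by simp⟩
  | insert k s hk ih =>
    rw [Finset.sum_insert hk] at h
    obtain ⟨q, hq⟩ : ∃ q : σ → MvPolynomial σ R, ∑ j ∈ s, q j * X j = f k := by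
      have : X k * f k ∈ Ideal.span (X '' (s : Set σ)) := by
        rw [show X k * f k = -∑ i ∈ s, f i * X i by linear_combination h]
        exact neg_mem <| Ideal.sum_mem _ fun i hi => Ideal.mul_mem_left _ _ <|
          Ideal.subset_span ⟨i, hi, rfl⟩
      simpa using (Submodule.mem_span_image_finset_iff_exists_fun' (R := MvPolynomial σ R)).1
        (mem_ideal_span_X_image_of_X_mul_mem hk this)
    obtain ⟨p, hp_diag, hp_antisymm, hp⟩ := ih (fun i => f i + q i * X k) <| by
      simp only [add_mul, Finset.sum_add_distrib, mul_right_comm _ (X k), ← Finset.sum_mul]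
      linear_combination h + X k * hq
    refine ⟨fun i j => if i = k then (if j = k then 0 else q j)
      else if j = k then -q i else p i j, ?_, ?_, ?_⟩
    · intro i
      dsimp only
      split_ifs <;> simp only [hp_diag]
    · intro i j
      dsimp only
      split_ifs <;> first | exact hp_antisymm i j | simp
    · intro i hi
      rw [Finset.sum_insert hk]
      rcases Finset.mem_insert.1 hi with rfl | hi
      · have : ∀ j ∈ s, j ≠ i := fun j hj h => hk (h ▸ hj)
        simp +contextual [this, hq]
      · have hik : i ≠ k := fun h => hk (h ▸ hi)
        have : ∀ j ∈ s, j ≠ k := fun j hj h => hk (h ▸ hj)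
        simp +contextual [this, hik, ← hp i hi]

end MvPolynomial

/-- Every `ℂ`-linear derivation `θ` of `P = ℂ[a,b,c,d]` with
`θ(ad - bc) = 0` is a `P`-linear combination of the six derivations
`c∂_a + d∂_b`, `b∂_a + d∂_c`, `a∂_a − d∂_d`, `b∂_b − c∂_c`, `a∂_b + c∂_d`, `a∂_c + b∂_d`. -/
theorem derivations_annihilating_det_generated
    (θ : Derivation ℂ P P) (hθ : θ (a * d - b * c) = 0) :
    ∃ p₁ p₂ p₃ p₄ p₅ p₆ : P,
      θ = p₁ • (c • da + d • db) + p₂ • (b • da + d • dc) + p₃ • (a • da - d • dd)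
        + p₄ • (b • db - c • dc) + p₅ • (a • db + c • dd) + p₆ • (a • dc + b • dd) := by
  have syzygy : ∑ i, ![θ (X 3), -θ (X 2), -θ (X 1), θ (X 0)] i * X i = 0 := by
    simp only [map_sub, Derivation.leibniz, a, b, c, d, smul_eq_mul] at hθ
    simp only [Fin.sum_univ_four, Matrix.cons_val, neg_mul]
    linear_combination hθ
  obtain ⟨p, hp_diag, hp_antisymm, hp⟩ := exists_alternating_of_sum_mul_X_eq_zero _ _ syzygy
  have h₀ := hp 0 (Finset.mem_univ _)
  have h₁ := hp 1 (Finset.mem_univ _)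
  have h₂ := hp 2 (Finset.mem_univ _)
  have h₃ := hp 3 (Finset.mem_univ _)
  simp only [Fin.sum_univ_four, Matrix.cons_val, hp_diag, hp_antisymm 3 2, hp_antisymm 3 1,
    hp_antisymm 3 0, hp_antisymm 1 2, hp_antisymm 0 2, hp_antisymm 0 1] at h₀ h₁ h₂ h₃
  refine ⟨p 3 2, p 3 1, p 3 0, p 1 2, p 0 2, p 0 1, derivation_ext fun i => ?_⟩
  fin_cases i <;>
    simp only [Derivation.add_apply, Derivation.sub_apply, Derivation.smul_apply, smul_eq_mul,
      da, db, dc, dd, a, b, c, d, pderiv_X, Pi.single_apply, Fin.zero_eta, Fin.mk_one,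
      Fin.reduceFinMk, Fin.isValue, Fin.reduceEq, ↓reduceIte] <;>
    [linear_combination h₃; linear_combination -h₂; linear_combination -h₁; linear_combination h₀]

end
end

section
/- Define the derivations of P = ℂ[a,b,c,d]: E_L = −(c∂_a + d∂_b), F_L = −(a∂_c + b∂_d), H_L = −a∂_a − b∂_b + c∂_c + d∂_d, E_R = a∂_b + c∂_d, F_R = b∂_a + d∂_c, H_R = a∂_a − b∂_b + c∂_c − d∂_d. Then the following identities of ℂ-linear endomorphisms of P hold (for every f ∈ P): (ad−bc)·E_R(f) = −a²·E_L(f) + c²·F_L(f) + ac·H_L(f); (ad−bc)·F_R(f) = b²·E_L(f) − d²·F_L(f) − bd·H_L(f); and (ad−bc)·H_R(f) = 2ab·E_L(f) − 2cd·F_L(f) − (ad+bc)·H_L(f). -/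
open MvPolynomial

noncomputable section

def EL : Derivation ℂ P P := -(c • da + d • db)
def FL : Derivation ℂ P P := -(a • dc + b • dd)
def HL : Derivation ℂ P P := -(a • da) - b • db + c • dc + d • dd
def ER : Derivation ℂ P P := a • db + c • dd
def FR : Derivation ℂ P P := b • da + d • dc
def HR : Derivation ℂ P P := a • da - b • db + c • dc - d • dd

theorem det_smul_ER : (a * d - b * c) • ER = -(a ^ 2 • EL) + c ^ 2 • FL + (a * c) • HL := by
  simp only [ER, EL, FL, HL]
  module

theorem det_smul_FR : (a * d - b * c) • FR = b ^ 2 • EL - d ^ 2 • FL - (b * d) • HL := by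
  simp only [FR, EL, FL, HL]
  module

theorem det_smul_HR :
    (a * d - b * c) • HR = (2 * (a * b)) • EL - (2 * (c * d)) • FL - (a * d + b * c) • HL := by
  simp only [HR, EL, FL, HL]
  module

/-- The identities expressing `(ad−bc)` times the right-invariant
vector fields in terms of the left-invariant ones. -/
theorem det_mul_right_fields_eq :
    (∀ f : P, (a * d - b * c) * ER f = -(a ^ 2 * EL f) + c ^ 2 * FL f + (a * c) * HL f) ∧
    (∀ f : P, (a * d - b * c) * FR f = b ^ 2 * EL f - d ^ 2 * FL f - (b * d) * HL f) ∧
    (∀ f : P, (a * d - b * c) * HR f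
      = 2 * (a * b) * EL f - 2 * (c * d) * FL f - (a * d + b * c) * HL f) := by
  refine ⟨fun f => ?_, fun f => ?_, fun f => ?_⟩
  · simpa using congr($det_smul_ER f)
  · simpa using congr($det_smul_FR f)
  · simpa using congr($det_smul_HR f)

end
end
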